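/- The Locally Toeplitz operator $LT_{a\cdot 1}$ with $a(x) = x^{-1/4}$ and $f \equiv 1$ satisfies $\|LT_{a\cdot 1}\|_G^2 = 2 < \infty$, but its square satisfies $\|LT_{a\cdot 1}^2\|_G^2 = \lim_{m\to\infty}\frac{1}{m}\sum_{p=1}^m (p/m)^{-1} = \infty$. Hence the square of an operator of finite $G$-norm can have infinite $G$-norm. -/

import Mathlib

open Filter Finset MeasureTheory
open scoped ENNReal

noncomputable section

/-- The index set `I = (0,1] ∩ ℚ`. -/
abbrev Iq : Type := {q : ℚ // 0 < q ∧ q ≤ 1}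

/-- The Hilbert space `ℋ² = ⊕_{l ∈ I} H²[-π,π]`, realized via the orthonormal basis
`{e_{lk} : l ∈ I, k ∈ ℕ}` as `ℓ²(I × ℕ)`. -/
abbrev H2 : Type := lp (fun _ : Iq × ℕ => ℂ) 2

/-- The basis vector `e_{lk}` of `ℋ²` (zero if `l ∉ (0,1]`). -/
def basisVec (l : ℚ) (k : ℕ) : H2 :=
  if h : 0 < l ∧ l ≤ 1 then lp.single 2 ((⟨l, h⟩ : Iq), k) (1 : ℂ) else 0

/-- Index set for `Bₙ = {e_{lr} : r = 0,…,⌊n/⌊√n⌋⌋-1, l ∈ I_{⌊√n⌋}}`: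
pairs `(p, r)` with `1 ≤ p ≤ ⌊√n⌋` and `r < ⌊n/⌊√n⌋⌋`, where `l = p/⌊√n⌋`. -/
def Bfin (n : ℕ) : Finset (ℕ × ℕ) :=
  (Finset.Icc 1 (Nat.sqrt n)) ×ˢ (Finset.range (n / Nat.sqrt n))

/-- The basis vector of `Bₙ` indexed by `(p, r)`, namely `e_{p/⌊√n⌋, r}`. -/
def bvec (n : ℕ) (pr : ℕ × ℕ) : H2 :=
  basisVec ((pr.1 : ℚ) / (Nat.sqrt n : ℚ)) pr.2

/-- `∑_{e ∈ C} ‖Te‖²` for a subset `C` of the index set of `Bₙ`. -/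
def sumSq (T : H2 → H2) (n : ℕ) (C : Finset (ℕ × ℕ)) : ℝ :=
  ∑ pr ∈ C, ‖T (bvec n pr)‖ ^ 2

/-- The seminorm `Q(T) = inf { limsup_n (1/√n)(∑_{e ∈ Cₙ} ‖Te‖²)^{1/2} }`, the infimum
over all decompositions `Bₙ = Cₙ ⊔ Dₙ` with `#Dₙ = o(n)`, valued in `ℝ≥0∞`. -/
def QQ (T : H2 → H2) : ℝ≥0∞ :=
  ⨅ (C : ℕ → Finset (ℕ × ℕ)) (_ : ∀ n, C n ⊆ Bfin n)
    (_ : Tendsto (fun n => ((Bfin n \ C n).card : ℝ) / n) atTop (nhds 0)),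
    Filter.limsup (fun n => ENNReal.ofReal (Real.sqrt (sumSq T n (C n) / n))) atTop

/-- `T` acts like the operator `T_{jk}`:
`T(e_{lr}) = e^{2πijl} e_{l,r+k}` when `r + k ≥ 0`, and `0` otherwise. -/
def IsTjk (T : H2 → H2) (j k : ℤ) : Prop :=
  ∀ (l : ℚ) (r : ℕ), T (basisVec l r) =
    if 0 ≤ (r : ℤ) + k then
      Complex.exp (2 * Real.pi * Complex.I * (j : ℂ) * (l : ℂ)) • basisVec l ((r : ℤ) + k).toNat
    else 0

/-! With `m = ⌊√n⌋`, every `e_{lr}` in `Bₙ` has `l = p/m`, and `‖U e_{lr}‖²` depends only on `l`: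
it is `l^{-1/2}` for `U = LT_{a·1}` and `l^{-1}` for its square. Summing over the `⌊n/m⌋` values
of `r` turns `(1/n) ∑_{Bₙ} ‖U e‖²` into `⌊n/m⌋·m/n → 1` times the Riemann sum
`(1/m) ∑_{p=1}^m φ(p/m)`. For `φ(x) = x^{-1/2}` this is `m^{-1/2} ∑_{p ≤ m} p^{-1/2}`, squeezed
to `2` by the telescoping bounds `2(√(p+1) - √p) ≤ p^{-1/2} ≤ 2(√p - √(p-1))`; for `φ(x) = x⁻¹`
it is the harmonic number `H_m ≥ log (m+1)`. -/

open Topology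

theorem inv_sqrt_add_one_le_two_mul_sqrt_add_one_sub {x : ℝ} (hx : 0 ≤ x) :
    (√(x + 1))⁻¹ ≤ 2 * (√(x + 1) - √x) := by
  have hb : 0 < √(x + 1) := Real.sqrt_pos.2 (by linarith)
  have hb2 := Real.sq_sqrt (show 0 ≤ x + 1 by linarith)
  have ha2 := Real.sq_sqrt hx
  rw [inv_le_iff_one_le_mul₀ hb]
  nlinarith [sq_nonneg (√(x + 1) - √x)]

theorem two_mul_sqrt_add_one_sub_le_inv_sqrt {x : ℝ} (hx : 0 < x) :
    2 * (√(x + 1) - √x) ≤ (√x)⁻¹ := by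
  have ha : 0 < √x := Real.sqrt_pos.2 hx
  have hb2 := Real.sq_sqrt (show 0 ≤ x + 1 by linarith)
  have ha2 := Real.sq_sqrt hx.le
  rw [← one_div, le_div_iff₀ ha]
  nlinarith [sq_nonneg (√(x + 1) - √x)]

theorem sum_Icc_inv_sqrt_le (m : ℕ) : ∑ p ∈ Icc 1 m, (√(p : ℝ))⁻¹ ≤ 2 * √m := by
  induction m with
  | zero => simp
  | succ m ih =>
    rw [sum_Icc_succ_top (by omega)]
    have := inv_sqrt_add_one_le_two_mul_sqrt_add_one_sub (Nat.cast_nonneg (α := ℝ) m)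
    push_cast
    linarith

theorem two_mul_sqrt_add_one_sub_one_le_sum_Icc_inv_sqrt (m : ℕ) :
    2 * (√((m : ℝ) + 1) - 1) ≤ ∑ p ∈ Icc 1 m, (√(p : ℝ))⁻¹ := by
  induction m with
  | zero => simp
  | succ m ih =>
    rw [sum_Icc_succ_top (by omega)]
    have := two_mul_sqrt_add_one_sub_le_inv_sqrt (Nat.cast_add_one_pos (α := ℝ) m)
    push_cast
    linarith

def riemannSum (φ : ℝ → ℝ) (m : ℕ) : ℝ :=
  (∑ p ∈ Icc 1 m, φ (p / m)) / m

theorem riemannSum_inv_sqrt (m : ℕ) :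
    riemannSum (fun x => (√x)⁻¹) m = (∑ p ∈ Icc 1 m, (√(p : ℝ))⁻¹) / √m := by
  rcases Nat.eq_zero_or_pos m with rfl | hm
  · simp [riemannSum]
  have hm' : 0 < √(m : ℝ) := Real.sqrt_pos.2 (by exact_mod_cast hm)
  have hm_nonneg : (0 : ℝ) ≤ m := Nat.cast_nonneg m
  simp only [riemannSum, Real.sqrt_div' _ hm_nonneg, inv_div, div_eq_mul_inv (√(m : ℝ)),
    ← mul_sum]
  rw [div_eq_div_iff (by positivity) hm'.ne']
  linear_combination (∑ p ∈ Icc 1 m, (√(p : ℝ))⁻¹) * Real.mul_self_sqrt hm_nonneg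

theorem tendsto_riemannSum_inv_sqrt : Tendsto (riemannSum fun x => (√x)⁻¹) atTop (𝓝 2) := by
  have h_sqrt : Tendsto (fun m : ℕ => √(m : ℝ)) atTop atTop :=
    Real.tendsto_sqrt_atTop.comp tendsto_natCast_atTop_atTop
  have h_lower : Tendsto (fun m : ℕ => 2 - 2 / √(m : ℝ)) atTop (𝓝 2) := by
    simpa using (h_sqrt.const_div_atTop 2).const_sub 2
  refine tendsto_of_tendsto_of_tendsto_of_le_of_le' h_lower tendsto_const_nhds ?_ ?_
  all_goals filter_upwards [eventually_ge_atTop 1] with m hm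
  all_goals have hm' : 0 < √(m : ℝ) := Real.sqrt_pos.2 (by exact_mod_cast hm)
  all_goals rw [riemannSum_inv_sqrt]
  · have h_sum := two_mul_sqrt_add_one_sub_one_le_sum_Icc_inv_sqrt m
    have h_mono := Real.sqrt_le_sqrt (show (m : ℝ) ≤ m + 1 by linarith)
    rw [le_div_iff₀ hm', sub_mul, div_mul_cancel₀ _ hm'.ne']
    linarith
  · rw [div_le_iff₀ hm']
    exact sum_Icc_inv_sqrt_le m

theorem riemannSum_inv (m : ℕ) : riemannSum (·⁻¹) m = harmonic m := by
  rw [riemannSum, harmonic_eq_sum_Icc]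
  push_cast
  rcases Nat.eq_zero_or_pos m with rfl | hm
  · simp
  rw [sum_div]
  refine sum_congr rfl fun p _ => ?_
  have : (m : ℝ) ≠ 0 := by positivity
  rw [inv_div, div_div_cancel_left' this]

theorem tendsto_riemannSum_inv : Tendsto (riemannSum (·⁻¹)) atTop atTop := by
  refine tendsto_atTop_mono (fun m => (riemannSum_inv m).symm ▸ log_add_one_le_harmonic m) ?_
  exact Real.tendsto_log_atTop.comp (tendsto_natCast_atTop_atTop.comp (tendsto_add_atTop_nat 1))

theorem tendsto_nat_sqrt_atTop : Tendsto Nat.sqrt atTop atTop :=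
  tendsto_atTop_atTop.2 fun b => ⟨b * b, fun _ hn => Nat.le_sqrt.2 hn⟩

theorem tendsto_div_sqrt_mul_sqrt_div_self :
    Tendsto (fun n : ℕ => ((n / Nat.sqrt n * Nat.sqrt n : ℕ) : ℝ) / n) atTop (𝓝 1) := by
  have h_lower : Tendsto (fun n : ℕ => (1 : ℝ) - 1 / (Nat.sqrt n : ℝ)) atTop (𝓝 1) := by
    simpa using (tendsto_one_div_atTop_nhds_zero_nat.comp tendsto_nat_sqrt_atTop).const_sub (1 : ℝ)
  refine tendsto_of_tendsto_of_tendsto_of_le_of_le' h_lower tendsto_const_nhds ?_ ?_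
  all_goals filter_upwards [eventually_ge_atTop 1] with n hn
  · set m := Nat.sqrt n
    have hm : 0 < m := Nat.sqrt_pos.2 hn
    have hm' : (0 : ℝ) < m := by exact_mod_cast hm
    have hn' : (0 : ℝ) < n := by exact_mod_cast hn
    have h_rem : (n : ℝ) - m ≤ (n / m * m : ℕ) := by
      have := Nat.lt_div_mul_add (a := n) hm
      rw [sub_le_iff_le_add]
      exact_mod_cast this.le
    have h_sq : (m : ℝ) / n ≤ 1 / m := by
      rw [div_le_div_iff₀ hn' hm']
      exact_mod_cast (by nlinarith [Nat.sqrt_le n] : m * m ≤ 1 * n)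
    calc 1 - 1 / (m : ℝ) ≤ 1 - m / n := by linarith
      _ = (n - m) / n := by field_simp
      _ ≤ _ := div_le_div_of_nonneg_right h_rem hn'.le
  · rw [div_le_one (by exact_mod_cast hn)]
    exact_mod_cast Nat.div_mul_le_self n (Nat.sqrt n)

theorem norm_basisVec {l : ℚ} (hl : 0 < l ∧ l ≤ 1) (k : ℕ) : ‖basisVec l k‖ = 1 := by
  rw [basisVec, dif_pos hl, lp.norm_single (by norm_num), norm_one]

theorem norm_ofReal_smul_basisVec_sq {l : ℚ} (hl : 0 < l ∧ l ≤ 1) (c : ℝ) (k : ℕ) :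
    ‖(c : ℂ) • basisVec l k‖ ^ 2 = c ^ 2 := by
  rw [norm_smul, norm_basisVec hl, mul_one, Complex.norm_real, Real.norm_eq_abs, sq_abs]

theorem inv_mul_sumSq_Bfin (U : H2 → H2) (φ : ℝ → ℝ)
    (hU : ∀ (l : ℚ) (r : ℕ), 0 < l → l ≤ 1 → ‖U (basisVec l r)‖ ^ 2 = φ l) (n : ℕ) :
    1 / (n : ℝ) * sumSq U n (Bfin n) =
      ((n / Nat.sqrt n * Nat.sqrt n : ℕ) : ℝ) / n * riemannSum φ (Nat.sqrt n) := by
  set m := Nat.sqrt n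
  have h_row : ∀ p ∈ Icc 1 m, ∑ r ∈ range (n / m), ‖U (bvec n (p, r))‖ ^ 2 =
      (n / m : ℕ) * φ (p / m) := by
    intro p hp
    obtain ⟨hp1, hpm⟩ := mem_Icc.1 hp
    have hm : (0 : ℚ) < m := by exact_mod_cast hp1.trans hpm
    have hl : 0 < (p : ℚ) / m ∧ (p : ℚ) / m ≤ 1 :=
      ⟨div_pos (by exact_mod_cast hp1) hm, div_le_one_of_le₀ (by exact_mod_cast hpm) hm.le⟩
    calc ∑ r ∈ range (n / m), ‖U (bvec n (p, r))‖ ^ 2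
        = ∑ r ∈ range (n / m), φ ((p / m : ℚ) : ℝ) := sum_congr rfl fun r _ => hU _ r hl.1 hl.2
      _ = (n / m : ℕ) * φ (p / m) := by
        rw [sum_const, card_range, nsmul_eq_mul]
        push_cast
        rfl
  rw [sumSq, Bfin, sum_product, sum_congr rfl h_row, ← mul_sum, riemannSum]
  rcases Nat.eq_zero_or_pos m with hm | hm
  · simp [hm]
  · field_simp
    push_cast
    ring

theorem rpow_neg_one_fourth_sq {x : ℝ} (hx : 0 ≤ x) : (x ^ (-(1 / 4 : ℝ))) ^ 2 = (√x)⁻¹ := by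
  rw [← Real.rpow_mul_natCast hx, Real.sqrt_eq_rpow, ← Real.rpow_neg hx]
  norm_num

theorem rpow_neg_one_fourth_pow_four {x : ℝ} (hx : 0 ≤ x) : (x ^ (-(1 / 4 : ℝ))) ^ 4 = x⁻¹ := by
  rw [← Real.rpow_mul_natCast hx, ← Real.rpow_neg_one]
  norm_num

/-- The Locally Toeplitz operator `LT_{a·1}` with `a(x) = x^{-1/4}`, `f ≡ 1`, acting by
`LT_{a·1}(e_{lr}) = l^{-1/4} e_{lr}`, has `‖LT_{a·1}‖_G² = 2 < ∞`, while its square, acting by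
`l^{-1/2} e_{lr}`, has `‖LT_{a·1}²‖_G² = lim_m (1/m) ∑_{p=1}^m (p/m)^{-1} = ∞`. -/
theorem LT_square_infinite_Gnorm (T : H2 →ₗ[ℂ] H2)
    (hT : ∀ (l : ℚ) (r : ℕ), T (basisVec l r) =
      ((((l : ℝ) ^ (-(1/4 : ℝ)) : ℝ) : ℂ)) • basisVec l r) :
    Filter.Tendsto (fun n : ℕ => (1 / (n : ℝ)) * sumSq ⇑T n (Bfin n)) atTop (nhds 2) ∧
    Filter.Tendsto (fun n : ℕ => (1 / (n : ℝ)) * sumSq (⇑T ∘ ⇑T) n (Bfin n)) atTop atTop := by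
  have hT_sq : ∀ (l : ℚ) (r : ℕ), 0 < l → l ≤ 1 → ‖T (basisVec l r)‖ ^ 2 = (√(l : ℝ))⁻¹ := by
    intro l r h0 h1
    rw [hT, norm_ofReal_smul_basisVec_sq ⟨h0, h1⟩, rpow_neg_one_fourth_sq (by positivity)]
  have hTT_sq : ∀ (l : ℚ) (r : ℕ), 0 < l → l ≤ 1 →
      ‖(T ∘ T) (basisVec l r)‖ ^ 2 = (l : ℝ)⁻¹ := by
    intro l r h0 h1
    rw [Function.comp_apply, hT, map_smul, hT, smul_smul, ← Complex.ofReal_mul,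
      norm_ofReal_smul_basisVec_sq ⟨h0, h1⟩, ← rpow_neg_one_fourth_pow_four (by positivity)]
    ring
  constructor
  · refine Tendsto.congr (fun n => (inv_mul_sumSq_Bfin _ (fun x => (√x)⁻¹) hT_sq n).symm) ?_
    simpa using tendsto_div_sqrt_mul_sqrt_div_self.mul
      (tendsto_riemannSum_inv_sqrt.comp tendsto_nat_sqrt_atTop)
  · refine Tendsto.congr (fun n => (inv_mul_sumSq_Bfin _ (·⁻¹) hTT_sq n).symm) ?_
    exact tendsto_div_sqrt_mul_sqrt_div_self.pos_mul_atTop one_pos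
      (tendsto_riemannSum_inv.comp tendsto_nat_sqrt_atTop)
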